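/- arXiv:0901.2094 — 2 statements merged into one kernel-verified Lean document; each statement's English description precedes it below -/
import Mathlib

section
/- Upper bound on the size of a circular c-order joint type class: The number of pairs of binary vectors of length k with circular c-order joint type λ satisfies |𝒯^k_λ| ≤ C₂ · 2^{k(H(λ) − H(λ'))} = C₂ · 2^{k H(λ̃|λ')}, where C₂ = 2^{2(c−1)}. -/
open Finset

noncomputable section

/-- Shannon entropy (base 2). -/
def H2 {α : Type*} [Fintype α] (p : α → ℝ) : ℝ :=
  ∑ a, -(p a * Real.logb 2 (p a))

/-- The circular window of length `c` of the vector `v` starting at position `t`. -/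
def cwin (c k : ℕ) (v : Fin k → Bool) (t : Fin k) : Fin c → Bool :=
  fun i => v ⟨((t : ℕ) + (i : ℕ)) % k, Nat.mod_lt _ t.pos⟩

/-- The circular `c`-order type of `v`: the frequency of each length-`c` pattern among
the `k` circular windows of `v`. -/
def ctype (c k : ℕ) (v : Fin k → Bool) (a : Fin c → Bool) : ℝ :=
  ((univ.filter fun t : Fin k => cwin c k v t = a).card : ℝ) / k

/-- The circular `c`-order joint type of a pair `(v, w)`. -/
def jctype (c k : ℕ) (v w : Fin k → Bool) (a b : Fin c → Bool) : ℝ :=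
  ((univ.filter fun t : Fin k => cwin c k v t = a ∧ cwin c k w t = b).card : ℝ) / k

/-- Extension of a length-`(c-1)` pattern by a final bit `x` to a length-`c` pattern. -/
def extPat (c : ℕ) (a' : Fin (c - 1) → Bool) (x : Bool) : Fin c → Bool :=
  fun i => if h : (i : ℕ) < c - 1 then a' ⟨i, h⟩ else x

/-- The `(c-1)`-order marginal `γ'` of a `c`-order type `γ`. -/
def margPrefix (c : ℕ) (γ : (Fin c → Bool) → ℝ) (a' : Fin (c - 1) → Bool) : ℝ :=
  ∑ x : Bool, γ (extPat c a' x)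

/-- The conditional entropy `H(γ̃|γ') = H(γ) − H(γ')`. -/
def HcondT (c : ℕ) (γ : (Fin c → Bool) → ℝ) : ℝ :=
  H2 γ - H2 (margPrefix c γ)

/-- The `(c-1)`-order marginal `λ'` of a `c`-order joint type `λ`. -/
def margPrefix2 (c : ℕ) (lam : (Fin c → Bool) → (Fin c → Bool) → ℝ)
    (q : (Fin (c - 1) → Bool) × (Fin (c - 1) → Bool)) : ℝ :=
  ∑ x : Bool, ∑ y : Bool, lam (extPat c q.1 x) (extPat c q.2 y)

/-- The conditional entropy `H(λ̃|λ') = H(λ) − H(λ')`. -/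
def HcondJ (c : ℕ) (lam : (Fin c → Bool) → (Fin c → Bool) → ℝ) : ℝ :=
  H2 (fun p : (Fin c → Bool) × (Fin c → Bool) => lam p.1 p.2) - H2 (margPrefix2 c lam)

/-- First marginal (the type of `v_i`) of a `c`-order joint type. -/
def margFst (c : ℕ) (lam : (Fin c → Bool) → (Fin c → Bool) → ℝ)
    (a : Fin c → Bool) : ℝ :=
  ∑ b : Fin c → Bool, lam a b

/-!
Read the conditional type `λ̃` as the transition kernel of a Markov chain of memory `c - 1` on
the alphabet `Bool × Bool`, and give a pair of vectors the circular weight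
`∏ₜ λ̃(window at t)`. The window counts of a pair of type `λ` are `k λ`, so every member of
`𝒯^k_λ` has the same weight `2^{-k H(λ̃|λ')}`. Dropping the `c - 1` wrapping windows bounds
the weight by the probability of a linear path, and these sum to at most one over the
continuations of each of the `4^{c-1}` initial states; hence `|𝒯^k_λ| 2^{-k H} ≤ 4^{c-1}`.
-/

lemma sum_prod_kernel_le_card_pow {A : Type*} [Fintype A] {m : ℕ}
    (p : (Fin m → A) → A → ℝ) (hp0 : ∀ s a, 0 ≤ p s a) (hp1 : ∀ s, ∑ a, p s a ≤ 1)
    (n : ℕ) :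
    ∑ x : Fin (m + n) → A, ∏ t : Fin n,
      p (fun i => x ⟨t + i, by omega⟩) (x ⟨t + m, by omega⟩) ≤ Fintype.card A ^ m := by
  induction n with
  | zero => simp
  | succ n ih =>
    calc ∑ x : Fin (m + n + 1) → A, ∏ t : Fin (n + 1),
          p (fun i => x ⟨t + i, by omega⟩) (x ⟨t + m, by omega⟩)
        = ∑ y : Fin (m + n) → A, (∏ t : Fin n,
            p (fun i => y ⟨t + i, by omega⟩) (y ⟨t + m, by omega⟩)) *
              ∑ a, p (fun i => y ⟨n + i, by omega⟩) a := by
          rw [← (Fin.snocEquiv fun _ => A).sum_comp, Fintype.sum_prod_type_right]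
          refine sum_congr rfl fun y _ => ?_
          rw [mul_sum]
          refine sum_congr rfl fun a _ => ?_
          rw [Fin.prod_univ_castSucc]
          congr 1
          · refine prod_congr rfl fun t _ => ?_
            have ht : ∀ i : Fin m, (t : ℕ) + i < m + n := fun i => by omega
            simp [Fin.snoc, ht, show (t : ℕ) + m < m + n by omega]
          · have hn : ∀ i : Fin m, n + i < m + n := fun i => by omega
            simp [Fin.snoc, hn, Nat.add_comm n m]
      _ ≤ ∑ y : Fin (m + n) → A, ∏ t : Fin n,
            p (fun i => y ⟨t + i, by omega⟩) (y ⟨t + m, by omega⟩) := by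
          refine sum_le_sum fun y _ => mul_le_of_le_one_right ?_ (hp1 _)
          exact prod_nonneg fun t _ => hp0 _ _
      _ ≤ Fintype.card A ^ m := ih

def prefixPat (c : ℕ) (a : Fin c → Bool) : Fin (c - 1) → Bool :=
  fun i => a (Fin.castLE (Nat.sub_le c 1) i)

@[simp]
lemma prefixPat_extPat (c : ℕ) (a' : Fin (c - 1) → Bool) (x : Bool) :
    prefixPat c (extPat c a' x) = a' := by
  funext i
  simp [prefixPat, extPat]

lemma extPat_prefixPat (c : ℕ) (hc : 1 ≤ c) (a : Fin c → Bool) :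
    extPat c (prefixPat c a) (a ⟨c - 1, by omega⟩) = a := by
  funext i
  by_cases h : (i : ℕ) < c - 1
  · simp [extPat, prefixPat, h]
  · simp only [extPat, dif_neg h]
    congr
    omega

def extPatEquiv (c : ℕ) (hc : 1 ≤ c) : (Fin (c - 1) → Bool) × Bool ≃ (Fin c → Bool) where
  toFun p := extPat c p.1 p.2
  invFun a := (prefixPat c a, a ⟨c - 1, by omega⟩)
  left_inv p := by simp [extPat]
  right_inv := extPat_prefixPat c hc

lemma sum_pair_eq_sum_extPat (c : ℕ) (hc : 1 ≤ c) {M : Type*} [AddCommMonoid M]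
    (f : (Fin c → Bool) → (Fin c → Bool) → M) :
    ∑ u : (Fin c → Bool) × (Fin c → Bool), f u.1 u.2 =
      ∑ q : (Fin (c - 1) → Bool) × (Fin (c - 1) → Bool), ∑ x : Bool, ∑ y : Bool,
        f (extPat c q.1 x) (extPat c q.2 y) := by
  rw [← ((Equiv.prodProdProdComm _ _ _ _).trans
    ((extPatEquiv c hc).prodCongr (extPatEquiv c hc))).sum_comp]
  simp [Fintype.sum_prod_type, extPatEquiv]

section Conditional

variable {c : ℕ} {lam : (Fin c → Bool) → (Fin c → Bool) → ℝ}

/-- `condJ c lam` is the conditional type `λ̃` of `λ = lam`. -/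
def condJ (c : ℕ) (lam : (Fin c → Bool) → (Fin c → Bool) → ℝ) (a b : Fin c → Bool) :
    ℝ :=
  lam a b / margPrefix2 c lam (prefixPat c a, prefixPat c b)

lemma le_margPrefix2 (hc : 1 ≤ c) (hlam : ∀ a b, 0 ≤ lam a b) (a b : Fin c → Bool) :
    lam a b ≤ margPrefix2 c lam (prefixPat c a, prefixPat c b) := by
  unfold margPrefix2
  rw [← Fintype.sum_prod_type']
  conv_lhs => rw [← extPat_prefixPat c hc a, ← extPat_prefixPat c hc b]
  exact single_le_sum (f := fun p : Bool × Bool =>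
    lam (extPat c (prefixPat c a) p.1) (extPat c (prefixPat c b) p.2))
    (fun _ _ => hlam _ _) (mem_univ (_, _))

lemma condJ_nonneg (hlam : ∀ a b, 0 ≤ lam a b) (a b : Fin c → Bool) : 0 ≤ condJ c lam a b :=
  div_nonneg (hlam a b) (sum_nonneg fun _ _ => sum_nonneg fun _ _ => hlam _ _)

lemma condJ_le_one (hc : 1 ≤ c) (hlam : ∀ a b, 0 ≤ lam a b) (a b : Fin c → Bool) :
    condJ c lam a b ≤ 1 :=
  div_le_one_of_le₀ (le_margPrefix2 hc hlam a b) ((hlam a b).trans (le_margPrefix2 hc hlam a b))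

lemma condJ_pos (hc : 1 ≤ c) (hlam : ∀ a b, 0 ≤ lam a b) {a b : Fin c → Bool}
    (hab : 0 < lam a b) : 0 < condJ c lam a b :=
  div_pos hab (hab.trans_le (le_margPrefix2 hc hlam a b))

lemma sum_condJ_extPat_le_one (q : (Fin (c - 1) → Bool) × (Fin (c - 1) → Bool)) :
    ∑ x : Bool, ∑ y : Bool, condJ c lam (extPat c q.1 x) (extPat c q.2 y) ≤ 1 := by
  simp only [condJ, prefixPat_extPat, ← sum_div]
  exact div_self_le_one _

lemma HcondJ_eq_neg_sum_mul_logb_condJ (hc : 1 ≤ c) (hlam : ∀ a b, 0 ≤ lam a b) :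
    HcondJ c lam = -∑ u : (Fin c → Bool) × (Fin c → Bool),
      lam u.1 u.2 * Real.logb 2 (condJ c lam u.1 u.2) := by
  have hsplit : ∀ u : (Fin c → Bool) × (Fin c → Bool),
      lam u.1 u.2 * Real.logb 2 (condJ c lam u.1 u.2) = lam u.1 u.2 * Real.logb 2 (lam u.1 u.2)
        - lam u.1 u.2 * Real.logb 2 (margPrefix2 c lam (prefixPat c u.1, prefixPat c u.2)) := by
    intro u
    rcases (hlam u.1 u.2).eq_or_lt with h0 | hpos
    · simp [← h0]
    · have hmarg := hpos.trans_le (le_margPrefix2 hc hlam u.1 u.2)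
      rw [condJ, Real.logb_div hpos.ne' hmarg.ne', mul_sub]
  have hmarg : ∑ u : (Fin c → Bool) × (Fin c → Bool),
      lam u.1 u.2 * Real.logb 2 (margPrefix2 c lam (prefixPat c u.1, prefixPat c u.2)) =
        ∑ q, margPrefix2 c lam q * Real.logb 2 (margPrefix2 c lam q) := by
    rw [sum_pair_eq_sum_extPat c hc (fun a b => lam a b *
      Real.logb 2 (margPrefix2 c lam (prefixPat c a, prefixPat c b)))]
    simp only [prefixPat_extPat, margPrefix2, sum_mul]
  simp only [HcondJ, H2, hsplit, sum_sub_distrib, hmarg, sum_neg_distrib]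
  ring

end Conditional

section Windows

variable {c k : ℕ}

lemma sum_cwin_eq_mul_sum_jctype (v w : Fin k → Bool)
    (f : (Fin c → Bool) × (Fin c → Bool) → ℝ) :
    ∑ t : Fin k, f (cwin c k v t, cwin c k w t) =
      k * ∑ u : (Fin c → Bool) × (Fin c → Bool), jctype c k v w u.1 u.2 * f u := by
  rcases Nat.eq_zero_or_pos k with rfl | hk
  · simp
  rw [← sum_fiberwise' univ (fun t => (cwin c k v t, cwin c k w t)), mul_sum]
  refine sum_congr rfl fun u _ => ?_
  have hk' : (k : ℝ) ≠ 0 := by positivity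
  simp only [sum_const, nsmul_eq_mul, jctype, Prod.ext_iff]
  field_simp

lemma jctype_nonneg (v w : Fin k → Bool) (a b : Fin c → Bool) : 0 ≤ jctype c k v w a b := by
  unfold jctype
  positivity

lemma jctype_cwin_pos (v w : Fin k → Bool) (t : Fin k) :
    0 < jctype c k v w (cwin c k v t) (cwin c k w t) :=
  div_pos (Nat.cast_pos.mpr (card_pos.mpr ⟨t, by simp⟩)) (Nat.cast_pos.mpr t.pos)

lemma cwin_eq_extPat (hc : 1 ≤ c) (v : Fin k → Bool) (t : ℕ) (ht : t + (c - 1) < k) :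
    cwin c k v ⟨t, by omega⟩ =
      extPat c (fun i => v ⟨t + i, by omega⟩) (v ⟨t + (c - 1), ht⟩) := by
  funext i
  by_cases hi : (i : ℕ) < c - 1
  · simp [cwin, extPat, hi, Nat.mod_eq_of_lt (show t + i < k by omega)]
  · simp [cwin, extPat, show (i : ℕ) = c - 1 by omega, Nat.mod_eq_of_lt ht]

end Windows

section Weight

variable {c k : ℕ} {lam : (Fin c → Bool) → (Fin c → Bool) → ℝ}

def markovWeight (c k : ℕ) (lam : (Fin c → Bool) → (Fin c → Bool) → ℝ)
    (v w : Fin k → Bool) : ℝ :=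
  ∏ t : Fin k, condJ c lam (cwin c k v t) (cwin c k w t)

/-- `λ̃` as a transition kernel of memory `c - 1` on the alphabet `Bool × Bool`. -/
def pairKernel (c : ℕ) (lam : (Fin c → Bool) → (Fin c → Bool) → ℝ)
    (s : Fin (c - 1) → Bool × Bool) (a : Bool × Bool) : ℝ :=
  condJ c lam (extPat c (fun i => (s i).1) a.1) (extPat c (fun i => (s i).2) a.2)

lemma markovWeight_eq_of_jctype_eq (hc : 1 ≤ c) {v w : Fin k → Bool}
    (h : jctype c k v w = lam) :
    markovWeight c k lam v w = 2 ^ (-(k * HcondJ c lam)) := by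
  subst h
  have hlam := jctype_nonneg (c := c) v w
  have hpos : ∀ t, 0 < condJ c (jctype c k v w) (cwin c k v t) (cwin c k w t) :=
    fun t => condJ_pos hc hlam (jctype_cwin_pos v w t)
  rw [markovWeight, ← Real.rpow_logb two_pos (by norm_num) (prod_pos fun t _ => hpos t),
    Real.logb_prod _ _ fun t _ => (hpos t).ne',
    sum_cwin_eq_mul_sum_jctype v w (fun u => Real.logb 2 (condJ c (jctype c k v w) u.1 u.2)),
    HcondJ_eq_neg_sum_mul_logb_condJ hc hlam, mul_neg, neg_neg]

lemma markovWeight_nonneg (hlam : ∀ a b, 0 ≤ lam a b) (v w : Fin k → Bool) :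
    0 ≤ markovWeight c k lam v w :=
  prod_nonneg fun _ _ => condJ_nonneg hlam _ _

lemma markovWeight_le_one (hc : 1 ≤ c) (hlam : ∀ a b, 0 ≤ lam a b) (v w : Fin k → Bool) :
    markovWeight c k lam v w ≤ 1 :=
  prod_le_one (fun _ _ => condJ_nonneg hlam _ _) (fun _ _ => condJ_le_one hc hlam _ _)

/-- Dropping the `c - 1` windows that wrap around leaves the weight of a linear path. -/
lemma markovWeight_le_prod_pairKernel (hc : 1 ≤ c) (hlam : ∀ a b, 0 ≤ lam a b) (n : ℕ)
    (x : Fin (c - 1 + n) → Bool × Bool) :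
    markovWeight c (c - 1 + n) lam (fun j => (x j).1) (fun j => (x j).2) ≤
      ∏ t : Fin n,
        pairKernel c lam (fun i => x ⟨t + i, by omega⟩) (x ⟨t + (c - 1), by omega⟩) := by
  have hn : n ≤ c - 1 + n := by omega
  calc markovWeight c (c - 1 + n) lam (fun j => (x j).1) (fun j => (x j).2)
      ≤ ∏ t ∈ univ.map (Fin.castLEEmb hn),
          condJ c lam (cwin c _ (fun j => (x j).1) t) (cwin c _ (fun j => (x j).2) t) :=
        prod_le_prod_of_subset_of_le_one (subset_univ _) (fun _ _ => condJ_nonneg hlam _ _)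
          (fun _ _ _ => condJ_le_one hc hlam _ _)
    _ = _ := by
        rw [prod_map]
        refine prod_congr rfl fun t _ => ?_
        have ht : (t : ℕ) + (c - 1) < c - 1 + n := by omega
        simp only [Fin.castLEEmb_apply, Fin.castLE, cwin_eq_extPat hc _ _ ht, pairKernel]

lemma sum_pairKernel_le_one (s : Fin (c - 1) → Bool × Bool) :
    ∑ a, pairKernel c lam s a ≤ 1 := by
  rw [Fintype.sum_prod_type]
  exact sum_condJ_extPat_le_one (fun i => (s i).1, fun i => (s i).2)

lemma sum_markovWeight_le (hc : 1 ≤ c) (hlam : ∀ a b, 0 ≤ lam a b) :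
    ∑ z : (Fin k → Bool) × (Fin k → Bool), markovWeight c k lam z.1 z.2 ≤ 4 ^ (c - 1) := by
  rcases lt_or_ge k (c - 1) with hk | hk
  · calc ∑ z : (Fin k → Bool) × (Fin k → Bool), markovWeight c k lam z.1 z.2
        ≤ ∑ _z : (Fin k → Bool) × (Fin k → Bool), (1 : ℝ) :=
          sum_le_sum fun z _ => markovWeight_le_one hc hlam _ _
      _ = 4 ^ k := by simp [← mul_pow]
      _ ≤ 4 ^ (c - 1) := pow_le_pow_right₀ (by norm_num) hk.le
  · obtain ⟨n, rfl⟩ := Nat.exists_eq_add_of_le hk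
    calc ∑ z : (Fin (c - 1 + n) → Bool) × (Fin (c - 1 + n) → Bool),
          markovWeight c _ lam z.1 z.2
        = ∑ x : Fin (c - 1 + n) → Bool × Bool,
            markovWeight c _ lam (fun j => (x j).1) (fun j => (x j).2) :=
          ((Equiv.arrowProdEquivProdArrow _ _ _).sum_comp _).symm
      _ ≤ ∑ x : Fin (c - 1 + n) → Bool × Bool, ∏ t : Fin n,
            pairKernel c lam (fun i => x ⟨t + i, by omega⟩) (x ⟨t + (c - 1), by omega⟩) :=
          sum_le_sum fun x _ => markovWeight_le_prod_pairKernel hc hlam n x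
      _ ≤ Fintype.card (Bool × Bool) ^ (c - 1) :=
          sum_prod_kernel_le_card_pow _ (fun _ _ => condJ_nonneg hlam _ _) sum_pairKernel_le_one n
      _ = 4 ^ (c - 1) := by simp

lemma ncard_jctype_eq_mul_le (hc : 1 ≤ c) (hlam : ∀ a b, 0 ≤ lam a b) :
    ({p : (Fin k → Bool) × (Fin k → Bool) | jctype c k p.1 p.2 = lam}.ncard : ℝ) *
      2 ^ (-(k * HcondJ c lam)) ≤ 4 ^ (c - 1) := by
  set S := {p : (Fin k → Bool) × (Fin k → Bool) | jctype c k p.1 p.2 = lam}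
  rw [Set.ncard_eq_toFinset_card S (Set.toFinite S)]
  calc _ = ∑ z ∈ (Set.toFinite S).toFinset, markovWeight c k lam z.1 z.2 := by
        rw [sum_congr rfl fun z hz =>
          markovWeight_eq_of_jctype_eq hc ((Set.toFinite S).mem_toFinset.mp hz),
          sum_const, nsmul_eq_mul]
    _ ≤ ∑ z : (Fin k → Bool) × (Fin k → Bool), markovWeight c k lam z.1 z.2 :=
        sum_le_sum_of_subset_of_nonneg (subset_univ _) fun z _ _ => markovWeight_nonneg hlam _ _
    _ ≤ 4 ^ (c - 1) := sum_markovWeight_le hc hlam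

end Weight

/-- For `c = 0` the truncated `c - 1 = 0` makes `λ'` sum four copies of `λ ≡ 1`, so the
conditional entropy takes the junk value `0 - H(4) = 8`. -/
lemma HcondJ_zero_jctype {k : ℕ} (hk : 0 < k) (v w : Fin k → Bool) :
    HcondJ 0 (jctype 0 k v w) = 8 := by
  have hone : ∀ a b, jctype 0 k v w a b = 1 := by
    intro a b
    have hv : ∀ t, cwin 0 k v t = a := fun _ => Subsingleton.elim _ _
    have hw : ∀ t, cwin 0 k w t = b := fun _ => Subsingleton.elim _ _
    simp [jctype, hv, hw, hk.ne']
  have hlog : Real.logb 2 4 = 2 := by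
    rw [show (4 : ℝ) = 2 ^ (2 : ℝ) by norm_num, Real.logb_rpow two_pos (by norm_num)]
  simp only [HcondJ, H2, margPrefix2, hone]
  norm_num [hlog]

lemma four_pow_le_rpow_HcondJ_zero {k : ℕ} (v w : Fin k → Bool) :
    (4 : ℝ) ^ k ≤ 2 ^ (k * HcondJ 0 (jctype 0 k v w)) := by
  rcases Nat.eq_zero_or_pos k with rfl | hk
  · simp
  rw [HcondJ_zero_jctype hk, show (4 : ℝ) ^ k = 2 ^ ((k : ℝ) * 2) by
    rw [mul_comm, Real.rpow_mul zero_le_two, Real.rpow_natCast]; norm_num]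
  have hk' : (0 : ℝ) < k := Nat.cast_pos.mpr hk
  exact Real.rpow_le_rpow_of_exponent_le one_le_two (by linarith)

lemma ncard_le_four_pow {k : ℕ} (S : Set ((Fin k → Bool) × (Fin k → Bool))) :
    (S.ncard : ℝ) ≤ 4 ^ k := by
  have h := Set.ncard_le_card S
  simp only [Nat.card_eq_fintype_card, Fintype.card_prod, Fintype.card_fun, Fintype.card_bool,
    Fintype.card_fin, ← mul_pow] at h
  exact_mod_cast h

/-- **Upper bound on the size of a circular `c`-order joint type class**: the number of
pairs of binary vectors of length `k` with circular `c`-order joint type `λ` satisfies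
`|𝒯^k_λ| ≤ C₂ · 2^{k H(λ̃|λ')}` with `C₂ = 2^{2(c−1)}`. -/
theorem joint_type_class_size_upper_bound
    (c k : ℕ) (lam : (Fin c → Bool) → (Fin c → Bool) → ℝ) :
    (Set.ncard {p : (Fin k → Bool) × (Fin k → Bool) | jctype c k p.1 p.2 = lam} : ℝ) ≤
      (2 : ℝ) ^ (2 * (c - 1)) * (2 : ℝ) ^ ((k : ℝ) * HcondJ c lam) := by
  rcases Set.eq_empty_or_nonempty
      {p : (Fin k → Bool) × (Fin k → Bool) | jctype c k p.1 p.2 = lam}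
    with hempty | ⟨⟨v, w⟩, rfl⟩
  · rw [hempty, Set.ncard_empty, Nat.cast_zero]
    positivity
  rcases Nat.eq_zero_or_pos c with rfl | hc
  · rw [Nat.zero_sub, mul_zero, pow_zero, one_mul]
    exact (ncard_le_four_pow _).trans (four_pow_le_rpow_HcondJ_zero v w)
  · have h := ncard_jctype_eq_mul_le (k := k) hc (jctype_nonneg v w)
    rw [Real.rpow_neg zero_le_two, ← div_eq_mul_inv, div_le_iff₀ (by positivity)] at h
    rwa [pow_mul, show (2 : ℝ) ^ 2 = 4 by norm_num]
end
end

section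
/- Counting bounds for two-dimensional types: For binary k×k target fields with circular boundary conditions, (i) the number α(γ_i, k) of fields with two-dimensional type γ_i is at most 2^{k² H((γ_{i(0)}, γ_{i(1)}))}, and (ii) the number β(λ, k) of fields f_j having two-dimensional joint type λ with a fixed field f_i is at most 2^{k² H((γ_{j(0)}, γ_{j(1)}))}, where γ_j is the second marginal type of λ and H is the binary Shannon entropy (base 2) of the indicated pair of fractions. -/
open Finset Filter

noncomputable section

/-- Kullback–Leibler divergence (base 2). -/
def KL2 {α : Type*} [Fintype α] (p q : α → ℝ) : ℝ :=
  ∑ a, p a * Real.logb 2 (p a / q a)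

/-- The coverage offsets of a sensor of Euclidean range `c`: integer offsets within
Euclidean distance `c` of the sensor's grid location. -/
def Off (c : ℕ) : Finset (ℤ × ℤ) :=
  (Finset.Icc (-(c : ℤ)) (c : ℤ) ×ˢ Finset.Icc (-(c : ℤ)) (c : ℤ)).filter
    fun p => p.1 ^ 2 + p.2 ^ 2 ≤ (c : ℤ) ^ 2

theorem zero_mem_Off (c : ℕ) : ((0, 0) : ℤ × ℤ) ∈ Off c := by
  simp only [Off, Finset.mem_filter, Finset.mem_product, Finset.mem_Icc]
  refine ⟨⟨⟨by simp, by simp⟩, ⟨by simp, by simp⟩⟩, by positivity⟩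

/-- The center offset `(0,0)` of the coverage region. -/
def center (c : ℕ) : {p : ℤ × ℤ // p ∈ Off c} := ⟨(0, 0), zero_mem_Off c⟩

/-- Circular (toroidal) wrap-around indexing. -/
def wrap (k : ℕ) (h : Fin k) (z : ℤ) : Fin k :=
  ⟨(((h : ℤ) + z) % (k : ℤ)).toNat, by
    have hk : 0 < (k : ℤ) := by exact_mod_cast h.pos
    have h0 : 0 ≤ ((h : ℤ) + z) % (k : ℤ) := Int.emod_nonneg _ (ne_of_gt hk)
    have h1 : ((h : ℤ) + z) % (k : ℤ) < (k : ℤ) := Int.emod_lt_of_pos _ hk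
    omega⟩

/-- The pattern seen by a sensor of range `c` placed at grid block `h` of the binary
field `f` (toroidal boundary conditions). -/
def win2 (c k : ℕ) (f : Fin k × Fin k → Bool) (h : Fin k × Fin k)
    (o : {p : ℤ × ℤ // p ∈ Off c}) : Bool :=
  f (wrap k h.1 o.1.1, wrap k h.2 o.1.2)

/-- The two-dimensional type of the field `f`: frequencies, over the `k²` sensor
placements, of each possible pattern on the coverage region. -/
def type2 (c k : ℕ) (f : Fin k × Fin k → Bool)
    (a : {p : ℤ × ℤ // p ∈ Off c} → Bool) : ℝ :=
  ((univ.filter fun h : Fin k × Fin k => win2 c k f h = a).card : ℝ) / (k ^ 2 : ℕ)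

/-- The two-dimensional joint type of a pair of fields `(f₁, f₂)`. -/
def jtype2 (c k : ℕ) (f₁ f₂ : Fin k × Fin k → Bool)
    (a b : {p : ℤ × ℤ // p ∈ Off c} → Bool) : ℝ :=
  ((univ.filter fun h : Fin k × Fin k =>
      win2 c k f₁ h = a ∧ win2 c k f₂ h = b).card : ℝ) / (k ^ 2 : ℕ)

/-- The single-position (bit) marginal of a two-dimensional type, via the pattern value
at the center of the coverage region. -/
def bit2 (c : ℕ) (γ : ({p : ℤ × ℤ // p ∈ Off c} → Bool) → ℝ) (x : Bool) : ℝ :=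
  ∑ a : {p : ℤ × ℤ // p ∈ Off c} → Bool, if a (center c) = x then γ a else 0

/-- The single-position pair marginal `λ_{(x)(y)}` of a two-dimensional joint type. -/
def bitJ2 (c : ℕ)
    (lam : ({p : ℤ × ℤ // p ∈ Off c} → Bool) → ({p : ℤ × ℤ // p ∈ Off c} → Bool) → ℝ)
    (x y : Bool) : ℝ :=
  ∑ a : {p : ℤ × ℤ // p ∈ Off c} → Bool, ∑ b : {p : ℤ × ℤ // p ∈ Off c} → Bool,
    if a (center c) = x ∧ b (center c) = y then lam a b else 0

/-- First marginal of a two-dimensional joint type. -/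
def margFst2 (c : ℕ)
    (lam : ({p : ℤ × ℤ // p ∈ Off c} → Bool) → ({p : ℤ × ℤ // p ∈ Off c} → Bool) → ℝ)
    (a : {p : ℤ × ℤ // p ∈ Off c} → Bool) : ℝ :=
  ∑ b : {p : ℤ × ℤ // p ∈ Off c} → Bool, lam a b

/-- Second marginal of a two-dimensional joint type. -/
def margSnd2 (c : ℕ)
    (lam : ({p : ℤ × ℤ // p ∈ Off c} → Bool) → ({p : ℤ × ℤ // p ∈ Off c} → Bool) → ℝ)
    (b : {p : ℤ × ℤ // p ∈ Off c} → Bool) : ℝ :=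
  ∑ a : {p : ℤ × ℤ // p ∈ Off c} → Bool, lam a b

/-! The centre of the window placed at `h` reads `f h`, so the single-bit marginal of the
type of `f` is the empirical distribution `p` of the bits of `f`, and the second marginal of
the joint type of `(f, f')` is the type of `f'`. Both bounds therefore reduce to the method
of types: under the i.i.d. law `p^{⊗n}` (`n = k²`) every sequence with empirical distribution
`p` has probability `∏ₐ pₐ^{n pₐ} = 2^{-n H(p)}`, and these probabilities sum to at most `1`. -/

lemma two_rpow_mul_mul_logb {t : ℝ} (ht : 0 ≤ t) (x : ℝ) :
    (2 : ℝ) ^ (x * t * Real.logb 2 t) = t ^ (x * t) := by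
  rcases ht.eq_or_lt with rfl | ht
  · simp
  · rw [mul_comm, Real.rpow_mul zero_le_two, Real.rpow_logb two_pos (by norm_num) ht]

section EmpiricalDist

variable {ι α β : Type*} [Fintype ι] [DecidableEq α]

def empiricalDist (g : ι → α) (a : α) : ℝ :=
  (#{i | g i = a} : ℝ) / Fintype.card ι

lemma empiricalDist_nonneg (g : ι → α) (a : α) : 0 ≤ empiricalDist g a := by
  unfold empiricalDist; positivity

lemma card_mul_empiricalDist (g : ι → α) (a : α) :
    Fintype.card ι * empiricalDist g a = #{i | g i = a} := by
  rcases isEmpty_or_nonempty ι with hι | hι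
  · simp
  · exact mul_div_cancel₀ _ (by positivity)

lemma sum_empiricalDist [Fintype α] [Nonempty ι] (g : ι → α) : ∑ a, empiricalDist g a = 1 := by
  simp only [empiricalDist, ← Finset.sum_div]
  rw [← Nat.cast_sum, ← Finset.card_eq_sum_card_fiberwise fun i _ => Finset.mem_univ (g i),
    Finset.card_univ, div_self (by positivity)]

lemma sum_ite_empiricalDist [Fintype β] [DecidableEq β] (φ : β → α) (g : ι → β) (x : α) :
    ∑ b, (if φ b = x then empiricalDist g b else 0) = empiricalDist (φ ∘ g) x := by
  simp only [empiricalDist, ← Finset.sum_filter, ← Finset.sum_div, ← Nat.cast_sum]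
  congr 2
  rw [Finset.card_eq_sum_card_fiberwise (t := {b | φ b = x}) (f := g) (fun i hi => by simp_all)]
  refine Finset.sum_congr rfl fun b hb => ?_
  rw [Finset.filter_filter]
  congr 1
  refine Finset.filter_congr fun i _ => ?_
  simp only [Finset.mem_filter, Finset.mem_univ, true_and] at hb
  exact ⟨fun h => ⟨by simp [h, hb], h⟩, And.right⟩

lemma sum_empiricalDist_prodMk [Fintype α] [Fintype β] [DecidableEq β]
    (g₁ : ι → β) (g₂ : ι → α) (b : α) :
    ∑ a, empiricalDist (fun i => (g₁ i, g₂ i)) (a, b) = empiricalDist g₂ b := by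
  have h := sum_ite_empiricalDist Prod.snd (fun i => (g₁ i, g₂ i)) b
  rwa [Fintype.sum_prod_type, Fintype.sum_congr _ _ fun a => Fintype.sum_ite_eq' b _] at h

lemma prod_empiricalDist_eq [Fintype α] (g : ι → α) :
    ∏ i, empiricalDist g (g i) = 2 ^ (-(Fintype.card ι * H2 (empiricalDist g))) := by
  rw [H2, Finset.mul_sum, ← Finset.sum_neg_distrib, Real.rpow_sum_of_pos two_pos,
    ← Finset.prod_fiberwise' Finset.univ g]
  refine Finset.prod_congr rfl fun a _ => ?_
  rw [Finset.prod_const, mul_neg, neg_neg, ← mul_assoc,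
    two_rpow_mul_mul_logb (empiricalDist_nonneg g a), card_mul_empiricalDist, Real.rpow_natCast]

theorem ncard_setOf_empiricalDist_eq_le [Fintype α] (p : α → ℝ) :
    ({g : ι → α | empiricalDist g = p}.ncard : ℝ) ≤ 2 ^ (Fintype.card ι * H2 p) := by
  classical
  rcases Set.eq_empty_or_nonempty {g : ι → α | empiricalDist g = p} with hT | ⟨g₀, rfl⟩
  · rw [hT, Set.ncard_empty, Nat.cast_zero]; positivity
  rw [← Finset.coe_filter_univ, Set.ncard_coe_finset]
  set T := ({g | empiricalDist g = empiricalDist g₀} : Finset (ι → α))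
  have total_mass : ∑ g : ι → α, ∏ i, empiricalDist g₀ (g i) = 1 := by
    rw [← Fintype.prod_sum]
    exact Finset.prod_eq_one fun i _ => haveI : Nonempty ι := ⟨i⟩; sum_empiricalDist g₀
  have mass_T : (#T : ℝ) * 2 ^ (-(Fintype.card ι * H2 (empiricalDist g₀))) ≤ 1 :=
    calc (#T : ℝ) * 2 ^ (-(Fintype.card ι * H2 (empiricalDist g₀)))
        = ∑ g ∈ T, ∏ i, empiricalDist g₀ (g i) := by
          rw [← nsmul_eq_mul, ← Finset.sum_const]
          refine Finset.sum_congr rfl fun g hg => ?_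
          rw [← (Finset.mem_filter.mp hg).2, prod_empiricalDist_eq]
      _ ≤ ∑ g : ι → α, ∏ i, empiricalDist g₀ (g i) :=
          Finset.sum_le_sum_of_subset_of_nonneg (Finset.subset_univ _)
            fun g _ _ => Finset.prod_nonneg fun i _ => empiricalDist_nonneg g₀ (g i)
      _ = 1 := total_mass
  rwa [Real.rpow_neg zero_le_two, ← div_eq_mul_inv, div_le_one (by positivity)] at mass_T

end EmpiricalDist

section Grid

variable {c k : ℕ}

lemma natCast_sq_eq_card (k : ℕ) : ((k ^ 2 : ℕ) : ℝ) = Fintype.card (Fin k × Fin k) := by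
  simp [sq]

lemma type2_eq_empiricalDist (f : Fin k × Fin k → Bool) :
    type2 c k f = empiricalDist (win2 c k f) := by
  ext a
  rw [type2, empiricalDist, natCast_sq_eq_card]

lemma jtype2_eq_empiricalDist (f₁ f₂ : Fin k × Fin k → Bool) (a b) :
    jtype2 c k f₁ f₂ a b = empiricalDist (fun h => (win2 c k f₁ h, win2 c k f₂ h)) (a, b) := by
  simp only [jtype2, empiricalDist, natCast_sq_eq_card, Prod.ext_iff]

lemma margSnd2_jtype2 (f₁ f₂ : Fin k × Fin k → Bool) :
    margSnd2 c (jtype2 c k f₁ f₂) = type2 c k f₂ := by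
  ext b
  simp only [margSnd2, jtype2_eq_empiricalDist, sum_empiricalDist_prodMk, type2_eq_empiricalDist]

lemma wrap_zero (h : Fin k) : wrap k h 0 = h := by
  have := h.isLt
  ext
  simp [wrap, Int.emod_eq_of_lt (by omega : (0 : ℤ) ≤ h) (by omega : (h : ℤ) < k)]

lemma win2_center (f : Fin k × Fin k → Bool) (h : Fin k × Fin k) :
    win2 c k f h (center c) = f h := by
  simp [win2, center, wrap_zero]

lemma bit2_type2 (f : Fin k × Fin k → Bool) : bit2 c (type2 c k f) = empiricalDist f := by
  ext x
  rw [bit2, type2_eq_empiricalDist, sum_ite_empiricalDist]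
  exact congrArg (empiricalDist · x) (funext (win2_center f))

theorem ncard_setOf_type2_eq_le (γ : ({p : ℤ × ℤ // p ∈ Off c} → Bool) → ℝ) :
    ({f : Fin k × Fin k → Bool | type2 c k f = γ}.ncard : ℝ) ≤
      2 ^ (((k ^ 2 : ℕ) : ℝ) * H2 (bit2 c γ)) := by
  refine le_trans ?_ (natCast_sq_eq_card k ▸ ncard_setOf_empiricalDist_eq_le (bit2 c γ))
  exact_mod_cast Set.ncard_le_ncard fun f (hf : type2 c k f = γ) => by
    simp [← hf, bit2_type2]

end Grid

/-- **Counting bounds for two-dimensional types**: (i) the number of binary `k × k`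
fields of two-dimensional type `γ` is at most `2^{k² H((γ_{(0)}, γ_{(1)}))}`; (ii) for
any fixed field `f`, the number of fields having two-dimensional joint type `λ` with
`f` is at most `2^{k² H((γ_{j(0)}, γ_{j(1)}))}`, `γ_j` the second marginal of `λ`. -/
theorem two_dimensional_type_counting_bounds
    (c k : ℕ) (γ : ({p : ℤ × ℤ // p ∈ Off c} → Bool) → ℝ)
    (lam : ({p : ℤ × ℤ // p ∈ Off c} → Bool) → ({p : ℤ × ℤ // p ∈ Off c} → Bool) → ℝ)
    (f : Fin k × Fin k → Bool) :
    (Set.ncard {f' : Fin k × Fin k → Bool | type2 c k f' = γ} : ℝ) ≤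
        (2 : ℝ) ^ (((k ^ 2 : ℕ) : ℝ) * H2 (fun x : Bool => bit2 c γ x)) ∧
      (Set.ncard {f' : Fin k × Fin k → Bool | jtype2 c k f f' = lam} : ℝ) ≤
        (2 : ℝ) ^ (((k ^ 2 : ℕ) : ℝ) * H2 (fun x : Bool => bit2 c (margSnd2 c lam) x)) := by
  have joint_subset : {f' | jtype2 c k f f' = lam} ⊆ {f' | type2 c k f' = margSnd2 c lam} :=
    fun f' (hf' : jtype2 c k f f' = lam) => by simp [← hf', margSnd2_jtype2]
  refine ⟨ncard_setOf_type2_eq_le γ, le_trans ?_ (ncard_setOf_type2_eq_le (margSnd2 c lam))⟩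
  exact_mod_cast Set.ncard_le_ncard joint_subset
end
end
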